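/- arXiv:2504.01638 — 5 statements merged into one kernel-verified Lean document; each statement's English description precedes it below -/
import Mathlib

section
/- Let X ⊆ ℝ^n, U ⊆ ℝ^s a nonempty compact set, f : ℝ^n × ℝ^s → ℝ^n, h : ℝ^n → ℝ and γ ∈ (0,1). Suppose h(x) < 0 for every x ∈ ℝ^n \ X; for every x ∈ X the map u ↦ h(f(x,u)) is continuous on U; and for every x ∈ X, sup_{u ∈ U} h(f(x,u)) ≥ γ·h(x). Then S = {x ∈ X | h(x) ≥ 0} is a one-step controlled safety invariant set: for every x ∈ S there exists u ∈ U such that f(x,u) ∈ S. -/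
/-! Compactness of `U` makes the supremum in the barrier condition a maximum, attained at some
control `u`. Then `h (f x u) ≥ γ * h x ≥ 0`, and since `h` is negative off `X`, the state
`f x u` lies in `X`. -/

theorem IsCompact.exists_le_of_le_sSup_image {β : Type*} [TopologicalSpace β] {U : Set β}
    (hUc : IsCompact U) (hU : U.Nonempty) {g : β → ℝ} (hg : ContinuousOn g U) {c : ℝ}
    (hc : c ≤ sSup (g '' U)) : ∃ u ∈ U, c ≤ g u := by
  obtain ⟨u, huU, hmax⟩ := hUc.exists_sSup_image_eq hU hg
  exact ⟨u, huU, hmax ▸ hc⟩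

theorem mem_of_nonneg_of_forall_notMem_neg {α : Type*} {X : Set α} {h : α → ℝ}
    (hneg : ∀ x, x ∉ X → h x < 0) {y : α} (hy : 0 ≤ h y) : y ∈ X := by
  by_contra hyX
  exact (hneg y hyX).not_ge hy

theorem mem_nonneg_superlevel_of_mul_le {α : Type*} {X : Set α} {h : α → ℝ}
    (hneg : ∀ x, x ∉ X → h x < 0) {γ : ℝ} (hγ : 0 ≤ γ) {x y : α} (hx : 0 ≤ h x)
    (hxy : γ * h x ≤ h y) : y ∈ {x ∈ X | h x ≥ 0} := by
  have hy : 0 ≤ h y := (mul_nonneg hγ hx).trans hxy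
  exact ⟨mem_of_nonneg_of_forall_notMem_neg hneg hy, hy⟩

/-- A discrete-time control barrier function (with λ = 0) certifies that its
zero-superlevel set inside the safe set `X` is a one-step controlled safety
invariant set: from every state of the set some admissible control keeps the
next state in the set. -/
theorem one_step_CSIS_of_control_barrier {n s : ℕ}
    (X : Set (Fin n → ℝ)) (U : Set (Fin s → ℝ))
    (hU : U.Nonempty) (hUc : IsCompact U)
    (f : (Fin n → ℝ) → (Fin s → ℝ) → (Fin n → ℝ))
    (h : (Fin n → ℝ) → ℝ) (γ : ℝ) (hγ : γ ∈ Set.Ioo (0 : ℝ) 1)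
    (hneg : ∀ x, x ∉ X → h x < 0)
    (hcont : ∀ x ∈ X, ContinuousOn (fun u => h (f x u)) U)
    (hbar : ∀ x ∈ X, sSup ((fun u => h (f x u)) '' U) ≥ γ * h x) :
    ∀ x ∈ {x ∈ X | h x ≥ 0}, ∃ u ∈ U, f x u ∈ {x ∈ X | h x ≥ 0} := by
  rintro x ⟨hxX, hx⟩
  obtain ⟨u, huU, hu⟩ := hUc.exists_le_of_le_sSup_image hU (hcont x hxX) (hbar x hxX)
  exact ⟨u, huU, mem_nonneg_superlevel_of_mul_le hneg hγ.1.le hx hu⟩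
end

section
/- Let μ be a probability measure on ℝ^n, let X ⊆ ℝ^n be measurable, let f : ℝ^n → ℝ^n and h : ℝ^n → ℝ be such that h(x) < 0 for all x ∉ X and the sets S = {x ∈ X | h(x) ≥ 0} and E = {x ∈ X | h(f(x)) ≥ γ·h(x)} are measurable, where γ ∈ (0,1). Suppose μ(S) > 0 and μ({x ∈ X | h(f(x)) < γ·h(x)}) ≤ α for some α ≥ 0. Then μ({x | f(x) ∈ S} ∩ S)/μ(S) ≥ 1 − α/μ(S); that is, the conditional probability, given x ∈ S, that f(x) ∈ S is at least 1 − α/μ(S). -/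
/-!
Every state of `S` either satisfies the decrease condition `h (f x) ≥ γ h x`, in which case
`h (f x) ≥ 0` forces `f x ∈ X` and hence `f x ∈ S`, or it lies in the violation set. So `S` is
covered by `f ⁻¹' S ∩ S` and the violation set, whence `μ S ≤ μ (f ⁻¹' S ∩ S) + α`; dividing by
`μ S` gives the bound.
-/

open MeasureTheory

theorem ENNReal.one_sub_div_le_div_of_le_add {a b c : ENNReal} (hc₀ : c ≠ 0) (hc : c ≠ ⊤)
    (h : c ≤ a + b) : 1 - b / c ≤ a / c := by
  rwa [tsub_le_iff_right, ENNReal.div_add_div_same,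
    ENNReal.le_div_iff_mul_le (.inl hc₀) (.inl hc), one_mul]

theorem superlevel_subset_preimage_inter_union_violation {α : Type*} {X : Set α} {f : α → α}
    {h : α → ℝ} {γ : ℝ} (hγ : 0 ≤ γ) (hneg : ∀ x, x ∉ X → h x < 0) :
    {x ∈ X | 0 ≤ h x} ⊆
      (f ⁻¹' {x ∈ X | 0 ≤ h x} ∩ {x ∈ X | 0 ≤ h x}) ∪ {x ∈ X | h (f x) < γ * h x} := by
  rintro x hxS
  rcases lt_or_ge (h (f x)) (γ * h x) with hviol | hdecr
  · exact .inr ⟨hxS.1, hviol⟩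
  · have hfx : 0 ≤ h (f x) := (mul_nonneg hγ hxS.2).trans hdecr
    exact .inl ⟨⟨by_contra fun hfX => (hneg _ hfX).not_ge hfx, hfx⟩, hxS⟩

theorem probabilistic_one_step_SIS_general {n : ℕ}
    (μ : Measure (Fin n → ℝ)) [IsProbabilityMeasure μ]
    (X : Set (Fin n → ℝ))
    (f : (Fin n → ℝ) → (Fin n → ℝ)) (h : (Fin n → ℝ) → ℝ)
    (γ : ℝ) (hγ : γ ∈ Set.Ioo (0 : ℝ) 1)
    (hneg : ∀ x, x ∉ X → h x < 0)
    (hSpos : 0 < μ {x ∈ X | h x ≥ 0})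
    (α : ENNReal)
    (hviol : μ {x ∈ X | h (f x) < γ * h x} ≤ α) :
    μ ({x | f x ∈ {x ∈ X | h x ≥ 0}} ∩ {x ∈ X | h x ≥ 0}) / μ {x ∈ X | h x ≥ 0}
      ≥ 1 - α / μ {x ∈ X | h x ≥ 0} := by
  refine ENNReal.one_sub_div_le_div_of_le_add hSpos.ne' (measure_ne_top μ _) ?_
  calc μ {x ∈ X | h x ≥ 0}
      ≤ μ (({x | f x ∈ {x ∈ X | h x ≥ 0}} ∩ {x ∈ X | h x ≥ 0}) ∪ {x ∈ X | h (f x) < γ * h x}) :=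
        measure_mono (superlevel_subset_preimage_inter_union_violation hγ.1.le hneg)
    _ ≤ _ := (measure_union_le _ _).trans (add_le_add le_rfl hviol)

/-- Probabilistic one-step invariance (uncontrolled case, Proposition 3):
if the scenario-optimization violation bound
`μ {x ∈ X | h (f x) < γ h x} ≤ α` holds, then the conditional probability,
given `x ∈ S = {x ∈ X | h x ≥ 0}`, that `f x ∈ S` is at least `1 - α / μ S`. -/
theorem probabilistic_one_step_SIS {n : ℕ}
    (μ : Measure (Fin n → ℝ)) [IsProbabilityMeasure μ]
    (X : Set (Fin n → ℝ)) (hX : MeasurableSet X)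
    (f : (Fin n → ℝ) → (Fin n → ℝ)) (h : (Fin n → ℝ) → ℝ)
    (γ : ℝ) (hγ : γ ∈ Set.Ioo (0 : ℝ) 1)
    (hneg : ∀ x, x ∉ X → h x < 0)
    (hSmeas : MeasurableSet {x ∈ X | h x ≥ 0})
    (hEmeas : MeasurableSet {x ∈ X | h (f x) ≥ γ * h x})
    (hSpos : 0 < μ {x ∈ X | h x ≥ 0})
    (α : ENNReal)
    (hviol : μ {x ∈ X | h (f x) < γ * h x} ≤ α) :
    μ ({x | f x ∈ {x ∈ X | h x ≥ 0}} ∩ {x ∈ X | h x ≥ 0}) / μ {x ∈ X | h x ≥ 0}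
      ≥ 1 - α / μ {x ∈ X | h x ≥ 0} :=
  probabilistic_one_step_SIS_general μ X f h γ hγ hneg hSpos α hviol
end

section
/- Let μ be a probability measure on ℝ^n, X ⊆ ℝ^n measurable, f : ℝ^n × ℝ^s → ℝ^n, h : ℝ^n → ℝ with h(x) < 0 for all x ∉ X, γ ∈ (0,1), controls u_1,…,u_M ∈ U ⊆ ℝ^s, and weight functions w_j : ℝ^n → ℝ with w_j(x) ≥ 0 and Σ_{j=1}^M w_j(x) = 1 for all x ∈ X. Assume the sets S = {x ∈ X | h(x) ≥ 0} and {x ∈ X | Σ_j w_j(x)·h(f(x,u_j)) < γ·h(x)} and {x ∈ S | ∃ j, f(x,u_j) ∈ S} are measurable, μ(S) > 0, and μ({x ∈ X | Σ_j w_j(x)·h(f(x,u_j)) < γ·h(x)}) ≤ α for some α ≥ 0. Then μ({x | ∃ u ∈ U, f(x,u) ∈ S} ∩ S)/μ(S) ≥ 1 − α/μ(S); in particular, the conditional probability, given x ∈ S, that some control u ∈ U keeps the next state f(x,u) in S is at least 1 − α/μ(S). -/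
open MeasureTheory

/-!
Off the violation set `V`, a point `x ∈ S` satisfies `Σ_j w_j(x) h(f(x,u_j)) ≥ γ h(x) ≥ 0`; a convex
combination is at most its largest term, so `h(f(x,u_j)) ≥ 0` for some `j`, and since `h < 0` off `X`
this puts `f(x,u_j)` in `S`. Hence `S \ V` lies in the event, whose measure is therefore at least
`μ S - μ V ≥ μ S - α`; dividing by `μ S` gives the bound.
-/

theorem Finset.exists_le_of_le_sum_mul {ι : Type*} {s : Finset ι} {w a : ι → ℝ}
    (hw₀ : ∀ i ∈ s, 0 ≤ w i) (hw₁ : ∑ i ∈ s, w i = 1) {c : ℝ}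
    (hc : c ≤ ∑ i ∈ s, w i * a i) : ∃ i ∈ s, c ≤ a i := by
  have hle := s.centerMass_le_sup (f := a) hw₀ (hw₁ ▸ one_pos)
  simp only [Finset.centerMass, hw₁, inv_one, one_mul, smul_eq_mul] at hle
  obtain ⟨i, hi, hmax⟩ := s.exists_mem_eq_sup' _ a
  exact ⟨i, hi, hc.trans (hmax ▸ hle)⟩

theorem ENNReal.one_sub_div_le_div_of_sub_le {a b c : ENNReal} (hb₀ : b ≠ 0) (hb : b ≠ ⊤)
    (h : b - c ≤ a) : 1 - c / b ≤ a / b := by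
  rw [← ENNReal.div_self hb₀ hb, ← ENNReal.sub_div fun _ _ => hb₀]
  exact ENNReal.div_le_div_right h b

theorem diff_violationSet_subset_viable {α β ι : Type*} [Fintype ι] {X : Set α}
    {f : α → β → α} {h : α → ℝ} {γ : ℝ} (hγ : 0 ≤ γ) (hneg : ∀ x, x ∉ X → h x < 0)
    {U : Set β} {u : ι → β} (hu : ∀ j, u j ∈ U) {w : ι → α → ℝ}
    (hw : ∀ j, ∀ x ∈ X, 0 ≤ w j x) (hw1 : ∀ x ∈ X, ∑ j, w j x = 1) :
    {x ∈ X | h x ≥ 0} \ {x ∈ X | ∑ j, w j x * h (f x (u j)) < γ * h x} ⊆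
      {x | ∃ u' ∈ U, f x u' ∈ {x ∈ X | h x ≥ 0}} ∩ {x ∈ X | h x ≥ 0} := by
  rintro x ⟨hxS, hxV⟩
  have ⟨hxX, hhx⟩ := hxS
  have hcomb : 0 ≤ ∑ j, w j x * h (f x (u j)) :=
    (mul_nonneg hγ hhx).trans (not_lt.mp fun hlt => hxV ⟨hxX, hlt⟩)
  obtain ⟨j, -, hj⟩ := Finset.exists_le_of_le_sum_mul (fun j _ => hw j x hxX) (hw1 x hxX) hcomb
  have hfX : f x (u j) ∈ X := by_contra fun hout => (hneg _ hout).not_ge hj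
  exact ⟨⟨u j, hu j, hfX, hj⟩, hxS⟩

theorem probabilistic_one_step_CSIS_general {n s : ℕ}
    (μ : Measure (Fin n → ℝ)) [IsProbabilityMeasure μ]
    (X : Set (Fin n → ℝ))
    (f : (Fin n → ℝ) → (Fin s → ℝ) → (Fin n → ℝ)) (h : (Fin n → ℝ) → ℝ)
    (γ : ℝ) (hγ : γ ∈ Set.Ioo (0 : ℝ) 1)
    (hneg : ∀ x, x ∉ X → h x < 0)
    (U : Set (Fin s → ℝ)) (M : ℕ)
    (u : Fin M → (Fin s → ℝ)) (hu : ∀ j, u j ∈ U)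
    (w : Fin M → (Fin n → ℝ) → ℝ)
    (hw : ∀ j, ∀ x ∈ X, 0 ≤ w j x)
    (hw1 : ∀ x ∈ X, ∑ j, w j x = 1)
    (hSpos : 0 < μ {x ∈ X | h x ≥ 0})
    (α : ENNReal)
    (hviol : μ {x ∈ X | ∑ j, w j x * h (f x (u j)) < γ * h x} ≤ α) :
    μ ({x | ∃ u' ∈ U, f x u' ∈ {x ∈ X | h x ≥ 0}} ∩ {x ∈ X | h x ≥ 0})
        / μ {x ∈ X | h x ≥ 0}
      ≥ 1 - α / μ {x ∈ X | h x ≥ 0} := by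
  refine ENNReal.one_sub_div_le_div_of_sub_le hSpos.ne' (measure_ne_top μ _) ?_
  calc μ {x ∈ X | h x ≥ 0} - α
      ≤ μ {x ∈ X | h x ≥ 0} - μ {x ∈ X | ∑ j, w j x * h (f x (u j)) < γ * h x} :=
        tsub_le_tsub_left hviol _
    _ ≤ μ ({x ∈ X | h x ≥ 0} \ {x ∈ X | ∑ j, w j x * h (f x (u j)) < γ * h x}) :=
        le_measure_sdiff
    _ ≤ _ := measure_mono (diff_violationSet_subset_viable hγ.1.le hneg hu hw hw1)

/-- Probabilistic one-step controlled invariance (Theorem 1): if the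
scenario-optimization violation bound for the weighted-average relaxation
`μ {x ∈ X | Σ_j w_j(x) h(f(x,u_j)) < γ h x} ≤ α` holds, then the conditional
probability, given `x ∈ S = {x ∈ X | h x ≥ 0}`, that some control `u ∈ U`
keeps the next state `f x u` in `S` is at least `1 - α / μ S`. -/
theorem probabilistic_one_step_CSIS {n s : ℕ}
    (μ : Measure (Fin n → ℝ)) [IsProbabilityMeasure μ]
    (X : Set (Fin n → ℝ)) (hX : MeasurableSet X)
    (f : (Fin n → ℝ) → (Fin s → ℝ) → (Fin n → ℝ)) (h : (Fin n → ℝ) → ℝ)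
    (γ : ℝ) (hγ : γ ∈ Set.Ioo (0 : ℝ) 1)
    (hneg : ∀ x, x ∉ X → h x < 0)
    (U : Set (Fin s → ℝ)) (M : ℕ) (hM : 1 ≤ M)
    (u : Fin M → (Fin s → ℝ)) (hu : ∀ j, u j ∈ U)
    (w : Fin M → (Fin n → ℝ) → ℝ)
    (hw : ∀ j, ∀ x ∈ X, 0 ≤ w j x)
    (hw1 : ∀ x ∈ X, ∑ j, w j x = 1)
    (hSmeas : MeasurableSet {x ∈ X | h x ≥ 0})
    (hVmeas : MeasurableSet {x ∈ X | ∑ j, w j x * h (f x (u j)) < γ * h x})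
    (hGmeas : MeasurableSet {x ∈ {x ∈ X | h x ≥ 0} | ∃ j, f x (u j) ∈ {x ∈ X | h x ≥ 0}})
    (hSpos : 0 < μ {x ∈ X | h x ≥ 0})
    (α : ENNReal)
    (hviol : μ {x ∈ X | ∑ j, w j x * h (f x (u j)) < γ * h x} ≤ α) :
    μ ({x | ∃ u' ∈ U, f x u' ∈ {x ∈ X | h x ≥ 0}} ∩ {x ∈ X | h x ≥ 0})
        / μ {x ∈ X | h x ≥ 0}
      ≥ 1 - α / μ {x ∈ X | h x ≥ 0} :=
  probabilistic_one_step_CSIS_general μ X f h γ hγ hneg U M u hu w hw hw1 hSpos α hviol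
end

section
/- Let h : ℝ^m × ℝ^n → ℝ, M ≥ 1, ε ∈ (0,1], γ ∈ (0,1), ε₀ > 0, λ̄ > 0, bounds U_1,…,U_m > 0, a point x₀ ∈ ℝ^n, sample states x_1,…,x_N ∈ ℝ^n, and observed successors y_{i,j} ∈ ℝ^n for i = 1,…,N, j = 1,…,M. Suppose (a₀, λ₀) satisfies the uniform-weight constraints: h(a₀,x₀) ≥ ε₀; (1/M)·Σ_{j=1}^M h(a₀, y_{i,j}) ≥ γ·h(a₀, x_i) − λ₀ for all i; λ₀ ∈ [0, λ̄]; and (a₀)_l ∈ [−U_l, U_l] for all l. For each i let j_i be an index maximizing j ↦ h(a₀, y_{i,j}), and define ε-greedy weights w_{i,j} = ε/M + (1−ε if j = j_i, else 0). Then (a₀, λ₀) also satisfies the ε-greedy-weight constraints (with Σ_j w_{i,j}·h(a, y_{i,j}) ≥ γ·h(a, x_i) − λ in place of the uniform average), and consequently the infimum λ₁* of λ over all (a, λ) satisfying the ε-greedy-weight constraints obeys λ₁* ≤ λ₀. -/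
/-! The ε-greedy weights are the convex combination `(1 - ε) δ_{j_i} + ε · uniform`. Since the
uniform average of `h a₀ (y i ·)` is at most its value at the maximizer `j_i`, moving weight
to `j_i` can only increase the weighted sum, so `(a₀, λ₀)` stays feasible; the feasible values
of `λ` are bounded below by `0`, hence their infimum is at most `λ₀`. -/

open Finset

theorem mean_le_of_forall_le_apply {ι : Type*} [Fintype ι] (f : ι → ℝ) (j₀ : ι)
    (hj₀ : ∀ j, f j ≤ f j₀) : (1 / Fintype.card ι) * ∑ j, f j ≤ f j₀ := by
  have hcard : (0 : ℝ) < Fintype.card ι := by exact_mod_cast Fintype.card_pos_iff.2 ⟨j₀⟩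
  have hsum : ∑ j, f j ≤ Fintype.card ι * f j₀ := by
    simpa using sum_le_card_nsmul univ f (f j₀) fun j _ ↦ hj₀ j
  rw [one_div_mul_eq_div, div_le_iff₀ hcard]
  linarith

theorem le_eps_greedy_sum_of_le_mean {ι : Type*} [Fintype ι] (f : ι → ℝ) (j₀ : ι)
    (hj₀ : ∀ j, f j ≤ f j₀) {ε t : ℝ} (hε : ε ≤ 1)
    (hmean : t ≤ (1 / Fintype.card ι) * ∑ j, f j) :
    t ≤ (1 - ε) * f j₀ + (ε / Fintype.card ι) * ∑ j, f j := by
  set μ := (1 / (Fintype.card ι : ℝ)) * ∑ j, f j with hμ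
  have hmax : μ ≤ f j₀ := mean_le_of_forall_le_apply f j₀ hj₀
  calc t ≤ (1 - ε) * μ + ε * μ := by linarith
    _ ≤ (1 - ε) * f j₀ + ε * μ := by gcongr
    _ = (1 - ε) * f j₀ + (ε / Fintype.card ι) * ∑ j, f j := by rw [hμ]; ring

theorem eps_greedy_LP_value_le_general {n m N M : ℕ}
    (h : (Fin m → ℝ) → (Fin n → ℝ) → ℝ)
    (ε : ℝ) (hε : ε ∈ Set.Ioc (0 : ℝ) 1) (γ : ℝ)
    (ε₀ : ℝ) (lamBar : ℝ)
    (U : Fin m → ℝ)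
    (x₀ : Fin n → ℝ) (x : Fin N → (Fin n → ℝ)) (y : Fin N → Fin M → (Fin n → ℝ))
    (a₀ : Fin m → ℝ) (lam₀ : ℝ)
    (h0 : h a₀ x₀ ≥ ε₀)
    (huni : ∀ i, (1 / M) * ∑ j, h a₀ (y i j) ≥ γ * h a₀ (x i) - lam₀)
    (hlam₀ : lam₀ ∈ Set.Icc 0 lamBar)
    (ha₀ : ∀ l, a₀ l ∈ Set.Icc (-(U l)) (U l))
    (jmax : Fin N → Fin M)
    (hjmax : ∀ i j, h a₀ (y i j) ≤ h a₀ (y i (jmax i))) :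
    (h a₀ x₀ ≥ ε₀ ∧
      (∀ i, (1 - ε) * h a₀ (y i (jmax i)) + (ε / M) * ∑ j, h a₀ (y i j) ≥
        γ * h a₀ (x i) - lam₀) ∧
      lam₀ ∈ Set.Icc 0 lamBar ∧ (∀ l, a₀ l ∈ Set.Icc (-(U l)) (U l))) ∧
    sInf {lam : ℝ | ∃ a : Fin m → ℝ,
        h a x₀ ≥ ε₀ ∧
        (∀ i, (1 - ε) * h a (y i (jmax i)) + (ε / M) * ∑ j, h a (y i j) ≥
          γ * h a (x i) - lam) ∧
        lam ∈ Set.Icc 0 lamBar ∧ (∀ l, a l ∈ Set.Icc (-(U l)) (U l))}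
      ≤ lam₀ := by
  have hgreedy : ∀ i, (1 - ε) * h a₀ (y i (jmax i)) + (ε / M) * ∑ j, h a₀ (y i j) ≥
      γ * h a₀ (x i) - lam₀ := fun i ↦ by
    have hcomb := le_eps_greedy_sum_of_le_mean (fun j ↦ h a₀ (y i j)) (jmax i) (hjmax i)
      (t := γ * h a₀ (x i) - lam₀) hε.2 (by rw [Fintype.card_fin]; exact huni i)
    rwa [Fintype.card_fin] at hcomb
  refine ⟨⟨h0, hgreedy, hlam₀, ha₀⟩, csInf_le ⟨0, ?_⟩ ⟨a₀, h0, hgreedy, hlam₀, ha₀⟩⟩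
  rintro lam ⟨-, -, -, hlam, -⟩
  exact hlam.1

/-- Proposition 4 (xi_de), first step: a solution `(a₀, λ₀)` of the
uniform-weight program (N_N_u0) remains feasible for the ε-greedy-weight
program (N_N_u2) whose distinguished indices maximize `j ↦ h a₀ (y i j)`, and
hence the optimal value of the ε-greedy program is at most `λ₀`. -/
theorem eps_greedy_LP_value_le {n m N M : ℕ} (hM : 1 ≤ M)
    (h : (Fin m → ℝ) → (Fin n → ℝ) → ℝ)
    (ε : ℝ) (hε : ε ∈ Set.Ioc (0 : ℝ) 1) (γ : ℝ) (hγ : γ ∈ Set.Ioo (0 : ℝ) 1)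
    (ε₀ : ℝ) (hε₀ : 0 < ε₀) (lamBar : ℝ) (hlamBar : 0 < lamBar)
    (U : Fin m → ℝ) (hU : ∀ l, 0 < U l)
    (x₀ : Fin n → ℝ) (x : Fin N → (Fin n → ℝ)) (y : Fin N → Fin M → (Fin n → ℝ))
    (a₀ : Fin m → ℝ) (lam₀ : ℝ)
    (h0 : h a₀ x₀ ≥ ε₀)
    (huni : ∀ i, (1 / M) * ∑ j, h a₀ (y i j) ≥ γ * h a₀ (x i) - lam₀)
    (hlam₀ : lam₀ ∈ Set.Icc 0 lamBar)
    (ha₀ : ∀ l, a₀ l ∈ Set.Icc (-(U l)) (U l))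
    (jmax : Fin N → Fin M)
    (hjmax : ∀ i j, h a₀ (y i j) ≤ h a₀ (y i (jmax i))) :
    (h a₀ x₀ ≥ ε₀ ∧
      (∀ i, (1 - ε) * h a₀ (y i (jmax i)) + (ε / M) * ∑ j, h a₀ (y i j) ≥
        γ * h a₀ (x i) - lam₀) ∧
      lam₀ ∈ Set.Icc 0 lamBar ∧ (∀ l, a₀ l ∈ Set.Icc (-(U l)) (U l))) ∧
    sInf {lam : ℝ | ∃ a : Fin m → ℝ,
        h a x₀ ≥ ε₀ ∧
        (∀ i, (1 - ε) * h a (y i (jmax i)) + (ε / M) * ∑ j, h a (y i j) ≥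
          γ * h a (x i) - lam) ∧
        lam ∈ Set.Icc 0 lamBar ∧ (∀ l, a l ∈ Set.Icc (-(U l)) (U l))}
      ≤ lam₀ :=
  eps_greedy_LP_value_le_general h ε hε γ ε₀ lamBar U x₀ x y a₀ lam₀ h0 huni hlam₀ ha₀ jmax hjmax
end

section
/- Let h : ℝ^m × ℝ^n → ℝ, M ≥ 1, ε ∈ (0,1], γ ∈ (0,1), ε₀ > 0, λ̄ > 0, bounds U_1,…,U_m > 0, x₀ ∈ ℝ^n, sample states x_1,…,x_N and successors y_{i,j} (i = 1,…,N, j = 1,…,M). Let j'_1,…,j'_N be arbitrary indices in {1,…,M} and suppose (a, λ) satisfies the ε-greedy constraints with distinguished indices j'_i: h(a,x₀) ≥ ε₀; (1−ε)·h(a, y_{i,j'_i}) + (ε/M)·Σ_{j=1}^M h(a, y_{i,j}) ≥ γ·h(a, x_i) − λ for all i; λ ∈ [0, λ̄]; a_l ∈ [−U_l, U_l]. For each i let j_i be an index maximizing j ↦ h(a, y_{i,j}). Then (a, λ) also satisfies the ε-greedy constraints with distinguished indices j_i, and hence the infimum of λ' over all (a', λ') satisfying the updated ε-greedy constraints is at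 most λ. -/
/-! Re-centering only changes the distinguished index of each constraint, and its weight `1 - ε`
is nonnegative; moving it to a maximizer of `j ↦ h a (y i j)` can only increase the left-hand
sides, so a feasible point stays feasible. The new optimal value is an infimum over a set that
contains `λ` and is bounded below by `0`. -/

section EpsGreedy

variable {L ι X : Type*} {M : ℕ}

/-- The constraints of the ε-greedy linear program whose distinguished control index at sample
`i` is `J i`. -/
def EpsGreedyFeasible (h : (L → ℝ) → X → ℝ) (ε γ ε₀ lamBar : ℝ) (U : L → ℝ) (x₀ : X)
    (x : ι → X) (y : ι → Fin M → X) (J : ι → Fin M) (a : L → ℝ) (lam : ℝ) : Prop :=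
  h a x₀ ≥ ε₀ ∧
    (∀ i, (1 - ε) * h a (y i (J i)) + (ε / M) * ∑ j, h a (y i j) ≥ γ * h a (x i) - lam) ∧
    lam ∈ Set.Icc 0 lamBar ∧ ∀ l, a l ∈ Set.Icc (-(U l)) (U l)

noncomputable def epsGreedyValue (h : (L → ℝ) → X → ℝ) (ε γ ε₀ lamBar : ℝ) (U : L → ℝ)
    (x₀ : X) (x : ι → X) (y : ι → Fin M → X) (J : ι → Fin M) : ℝ :=
  sInf {lam | ∃ a, EpsGreedyFeasible h ε γ ε₀ lamBar U x₀ x y J a lam}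

theorem greedy_combination_le_of_le {κ : Type*} [Fintype κ] {v : κ → ℝ} {ε : ℝ} (hε : ε ≤ 1)
    (c : ℝ) {j k : κ} (hjk : v j ≤ v k) :
    (1 - ε) * v j + c * ∑ i, v i ≤ (1 - ε) * v k + c * ∑ i, v i :=
  add_le_add_left (mul_le_mul_of_nonneg_left hjk (sub_nonneg.2 hε)) _

variable {h : (L → ℝ) → X → ℝ} {ε γ ε₀ lamBar : ℝ} {U : L → ℝ} {x₀ : X} {x : ι → X}
  {y : ι → Fin M → X} {J J' : ι → Fin M} {a : L → ℝ} {lam : ℝ}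

theorem EpsGreedyFeasible.of_le (hε : ε ≤ 1)
    (hfeas : EpsGreedyFeasible h ε γ ε₀ lamBar U x₀ x y J a lam)
    (hJ : ∀ i, h a (y i (J i)) ≤ h a (y i (J' i))) :
    EpsGreedyFeasible h ε γ ε₀ lamBar U x₀ x y J' a lam := by
  obtain ⟨h0, hcon, hlam, ha⟩ := hfeas
  exact ⟨h0, fun i => (hcon i).trans (greedy_combination_le_of_le (v := fun j => h a (y i j)) hε _ (hJ i)), hlam, ha⟩

theorem epsGreedyValue_le (hfeas : EpsGreedyFeasible h ε γ ε₀ lamBar U x₀ x y J a lam) :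
    epsGreedyValue h ε γ ε₀ lamBar U x₀ x y J ≤ lam :=
  csInf_le ⟨0, fun _ ⟨_, _, _, hlam', _⟩ => hlam'.1⟩ ⟨a, hfeas⟩

end EpsGreedy

theorem eps_greedy_recenter_value_le_general {n m N M : ℕ}
    (h : (Fin m → ℝ) → (Fin n → ℝ) → ℝ)
    (ε : ℝ) (hε : ε ∈ Set.Ioc (0 : ℝ) 1) (γ : ℝ)
    (ε₀ : ℝ) (lamBar : ℝ)
    (U : Fin m → ℝ)
    (x₀ : Fin n → ℝ) (x : Fin N → (Fin n → ℝ)) (y : Fin N → Fin M → (Fin n → ℝ))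
    (j' : Fin N → Fin M)
    (a : Fin m → ℝ) (lam : ℝ)
    (h0 : h a x₀ ≥ ε₀)
    (hfeas : ∀ i, (1 - ε) * h a (y i (j' i)) + (ε / M) * ∑ j, h a (y i j) ≥
      γ * h a (x i) - lam)
    (hlam : lam ∈ Set.Icc 0 lamBar)
    (ha : ∀ l, a l ∈ Set.Icc (-(U l)) (U l))
    (jmax : Fin N → Fin M)
    (hjmax : ∀ i j, h a (y i j) ≤ h a (y i (jmax i))) :
    (h a x₀ ≥ ε₀ ∧
      (∀ i, (1 - ε) * h a (y i (jmax i)) + (ε / M) * ∑ j, h a (y i j) ≥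
        γ * h a (x i) - lam) ∧
      lam ∈ Set.Icc 0 lamBar ∧ (∀ l, a l ∈ Set.Icc (-(U l)) (U l))) ∧
    sInf {lam' : ℝ | ∃ a' : Fin m → ℝ,
        h a' x₀ ≥ ε₀ ∧
        (∀ i, (1 - ε) * h a' (y i (jmax i)) + (ε / M) * ∑ j, h a' (y i j) ≥
          γ * h a' (x i) - lam') ∧
        lam' ∈ Set.Icc 0 lamBar ∧ (∀ l, a' l ∈ Set.Icc (-(U l)) (U l))}
      ≤ lam := by
  have hfeas' : EpsGreedyFeasible h ε γ ε₀ lamBar U x₀ x y jmax a lam :=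
    EpsGreedyFeasible.of_le hε.2 ⟨h0, hfeas, hlam, ha⟩ fun i => hjmax i (j' i)
  exact ⟨hfeas', epsGreedyValue_le hfeas'⟩

/-- Monotonicity of the optimal value along the ε-greedy re-centering
iteration: if `(a, λ)` satisfies the ε-greedy constraints with arbitrary
distinguished indices `j'ᵢ`, then it also satisfies the ε-greedy constraints
whose distinguished indices `jᵢ` maximize `j ↦ h a (y i j)`, and hence the
optimal value of the updated program is at most `λ`. -/
theorem eps_greedy_recenter_value_le {n m N M : ℕ} (hM : 1 ≤ M)
    (h : (Fin m → ℝ) → (Fin n → ℝ) → ℝ)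
    (ε : ℝ) (hε : ε ∈ Set.Ioc (0 : ℝ) 1) (γ : ℝ) (hγ : γ ∈ Set.Ioo (0 : ℝ) 1)
    (ε₀ : ℝ) (hε₀ : 0 < ε₀) (lamBar : ℝ) (hlamBar : 0 < lamBar)
    (U : Fin m → ℝ) (hU : ∀ l, 0 < U l)
    (x₀ : Fin n → ℝ) (x : Fin N → (Fin n → ℝ)) (y : Fin N → Fin M → (Fin n → ℝ))
    (j' : Fin N → Fin M)
    (a : Fin m → ℝ) (lam : ℝ)
    (h0 : h a x₀ ≥ ε₀)
    (hfeas : ∀ i, (1 - ε) * h a (y i (j' i)) + (ε / M) * ∑ j, h a (y i j) ≥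
      γ * h a (x i) - lam)
    (hlam : lam ∈ Set.Icc 0 lamBar)
    (ha : ∀ l, a l ∈ Set.Icc (-(U l)) (U l))
    (jmax : Fin N → Fin M)
    (hjmax : ∀ i j, h a (y i j) ≤ h a (y i (jmax i))) :
    (h a x₀ ≥ ε₀ ∧
      (∀ i, (1 - ε) * h a (y i (jmax i)) + (ε / M) * ∑ j, h a (y i j) ≥
        γ * h a (x i) - lam) ∧
      lam ∈ Set.Icc 0 lamBar ∧ (∀ l, a l ∈ Set.Icc (-(U l)) (U l))) ∧
    sInf {lam' : ℝ | ∃ a' : Fin m → ℝ,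
        h a' x₀ ≥ ε₀ ∧
        (∀ i, (1 - ε) * h a' (y i (jmax i)) + (ε / M) * ∑ j, h a' (y i j) ≥
          γ * h a' (x i) - lam') ∧
        lam' ∈ Set.Icc 0 lamBar ∧ (∀ l, a' l ∈ Set.Icc (-(U l)) (U l))}
      ≤ lam :=
  eps_greedy_recenter_value_le_general h ε hε γ ε₀ lamBar U x₀ x y j' a lam h0 hfeas hlam ha jmax
    hjmax
end
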